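/- arXiv:0708.1210 — 5 statements merged into one kernel-verified Lean document; each statement's English description precedes it below -/
import Mathlib

section
/- Let m ≥ 1, let B : ℝ^m × ℝ^m → M_m(ℝ) be a symmetric bilinear map into the m×m real matrices, and set J(x) := B(x,x). Suppose there exist a set S ⊆ ℂ and a function c : ℝ^m → ℂ such that for every x ∈ ℝ^m the set of complex roots of the characteristic polynomial of J(x) equals the set c(x)·S = {c(x)·s : s ∈ S}. Then there exist a multiset M of complex numbers of cardinality m and a function c' : ℝ^m → ℂ such that for every x ∈ ℝ^m the complex root multiset of J(x) equals the multiset obtained from M by multiplying each element by c'(x). (Paper's Lemma 2.1: projectively Osserman at a point implies strongly projectively Osserman at that point.) -/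
/-!
The coefficients of the characteristic polynomial of `J(x)` are polynomial functions of `x`.
Scaling the roots of a monic polynomial of degree `m` by `t` multiplies its `k`-th coefficient
by `t ^ (m - k)`, so the monic polynomials with root multiset `t • N` (`t` varying) form a
weighted orbit in coefficient space. That orbit is Zariski closed: a point satisfying all the
binomial relations of the orbit lies on it, the scaling `t` being recovered from the relations
by Bézout on the weights. If some `J(x)` has a nonzero root, `S` is finite, so the root multisets
of all `J(x)` are scalings of finitely many patterns `N`. As `ℝ^m` is Zariski dense in `ℂ^m`, it
is not covered by finitely many proper closed subsets, and a single pattern serves every `x`.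
-/

open Finset

section WeightRelations

variable {ι G : Type*} [CommGroup G] {s : Finset ι} {w : ι → ℕ} {r : ι → G}

theorem Finset.prod_zpow_eq_of_sum_mul_eq
    (h : ∀ u v : ι → ℕ, ∑ i ∈ s, u i * w i = ∑ i ∈ s, v i * w i →
      ∏ i ∈ s, r i ^ u i = ∏ i ∈ s, r i ^ v i)
    {a b : ι → ℤ} (hab : ∑ i ∈ s, a i * w i = ∑ i ∈ s, b i * w i) :
    ∏ i ∈ s, r i ^ a i = ∏ i ∈ s, r i ^ b i := by
  have hsplit : ∀ z : ι → ℤ, ∏ i ∈ s, r i ^ z i =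
      (∏ i ∈ s, r i ^ (z i).toNat) / ∏ i ∈ s, r i ^ (-z i).toNat := by
    intro z
    rw [← prod_div_distrib]
    refine prod_congr rfl fun i _ => ?_
    rw [← zpow_natCast, ← zpow_natCast, div_eq_mul_inv, ← zpow_sub, Int.toNat_sub_toNat_neg]
  have key := h (fun i => (a i).toNat + (-b i).toNat) (fun i => (b i).toNat + (-a i).toNat) (by
    have hab' : ∑ i ∈ s, (((a i).toNat : ℤ) - (-a i).toNat) * w i =
        ∑ i ∈ s, (((b i).toNat : ℤ) - (-b i).toNat) * w i := by
      simpa only [Int.toNat_sub_toNat_neg] using hab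
    zify
    simp only [sub_mul, add_mul, sum_sub_distrib, sum_add_distrib] at hab' ⊢
    linarith)
  simp only [pow_add, prod_mul_distrib] at key
  rw [hsplit, hsplit, div_eq_div_iff_mul_eq_mul]
  exact key

theorem Finset.exists_pow_eq_of_sum_mul_eq [RootableBy G ℕ] (hw : ∀ i ∈ s, w i ≠ 0)
    (h : ∀ u v : ι → ℕ, ∑ i ∈ s, u i * w i = ∑ i ∈ s, v i * w i →
      ∏ i ∈ s, r i ^ u i = ∏ i ∈ s, r i ^ v i) :
    ∃ g : G, ∀ i ∈ s, g ^ w i = r i := by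
  classical
  rcases s.eq_empty_or_nonempty with rfl | ⟨i₀, hi₀⟩
  · exact ⟨1, by simp⟩
  obtain ⟨γ, hγ⟩ := s.gcd_eq_sum_mul fun i => (w i : ℤ)
  obtain ⟨d, hd⟩ := Int.eq_ofNat_of_zero_le (Int.nonneg_of_normalize_eq_self
    (s.normalize_gcd (f := fun i => (w i : ℤ))))
  have hd0 : d ≠ 0 := by
    rintro rfl
    exact hw i₀ hi₀ (by exact_mod_cast (gcd_eq_zero_iff.mp hd) i₀ hi₀)
  have hdvd : ∀ i ∈ s, d ∣ w i := fun i hi => by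
    exact_mod_cast hd ▸ gcd_dvd (f := fun i => (w i : ℤ)) hi
  -- `∑ γ i * w i = d`, so `r i` and `(∏ r j ^ γ j) ^ (w i / d)` have the same weight.
  refine ⟨RootableBy.root (∏ i ∈ s, r i ^ γ i) d, fun i hi => ?_⟩
  obtain ⟨k, hk⟩ := hdvd i hi
  have hsum : ∑ j ∈ s, γ j * k * w j = ∑ j ∈ s, (if j = i then 1 else 0 : ℤ) * w j := by
    simp only [ite_mul, one_mul, zero_mul, sum_ite_eq', if_pos hi, hk, Nat.cast_mul, ← hd, hγ,
      sum_mul]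
    exact sum_congr rfl fun j _ => by ring
  calc RootableBy.root (∏ j ∈ s, r j ^ γ j) d ^ w i
      = ∏ j ∈ s, r j ^ (γ j * k) := by
        rw [hk, pow_mul, RootableBy.root_cancel _ hd0, ← zpow_natCast, ← prod_zpow]
        simp_rw [zpow_mul]
    _ = ∏ j ∈ s, r j ^ (if j = i then 1 else 0 : ℤ) := prod_zpow_eq_of_sum_mul_eq h hsum
    _ = r i := by simp [hi]

end WeightRelations

noncomputable instance IsAlgClosed.rootableByUnits (K : Type*) [Field K] [IsAlgClosed K] :
    RootableBy Kˣ ℕ :=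
  rootableByOfPowLeftSurj _ _ fun {n} hn g => by
    obtain ⟨z, hz⟩ := IsAlgClosed.exists_pow_nat_eq (g : K) (Nat.pos_of_ne_zero hn)
    have hz0 : z ≠ 0 := by
      rintro rfl
      exact g.ne_zero (by rw [← hz, zero_pow hn])
    exact ⟨Units.mk0 z hz0, Units.ext (by simpa using hz)⟩

section WeightedOrbit

variable {ι K : Type*} [Field K]

def weightedOrbit (w : ι → ℕ) (η : ι → K) : Set (ι → K) :=
  Set.range fun t i => t ^ w i * η i

variable [Fintype ι] [IsAlgClosed K] {w : ι → ℕ} {η T : ι → K}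

theorem mem_weightedOrbit_of_prod_pow_eq (hw : ∀ i, w i ≠ 0) (hzero : ∀ i, η i = 0 → T i = 0)
    (hrel : ∀ (s : Finset ι) (u v : ι → ℕ), ∑ i ∈ s, u i * w i = ∑ i ∈ s, v i * w i →
      (∏ i ∈ s, η i ^ v i) * ∏ i ∈ s, T i ^ u i = (∏ i ∈ s, η i ^ u i) * ∏ i ∈ s, T i ^ v i) :
    T ∈ weightedOrbit w η := by
  classical
  by_cases hcollapse : ∃ i, η i ≠ 0 ∧ T i = 0
  · -- then the relation `η k ^ w i * T i ^ w k = η i ^ w k * T k ^ w i` forces `T = 0`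
    obtain ⟨i, hηi, hTi⟩ := hcollapse
    refine ⟨0, funext fun k => ?_⟩
    show 0 ^ w k * η k = T k
    rw [zero_pow (hw k), zero_mul, eq_comm]
    by_cases hηk : η k = 0
    · exact hzero k hηk
    have := hrel univ (Pi.single i (w k)) (Pi.single k (w i))
      (by simp [Pi.single_apply, mul_comm])
    simpa [Pi.single_apply, hTi, zero_pow (hw k), hηi, hw i] using this
  push Not at hcollapse
  set J := univ.filter (η · ≠ 0)
  have hunit : ∀ i ∈ J, IsUnit (T i / η i) := fun i hi => by
    have hηi := (mem_filter.mp hi).2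
    exact (div_ne_zero (hcollapse i hηi) hηi).isUnit
  choose! r hr using hunit
  obtain ⟨g, hg⟩ := exists_pow_eq_of_sum_mul_eq (s := J) (fun i _ => hw i) (r := r) (by
    intro u v huv
    have hη : ∀ n : ι → ℕ, ∏ i ∈ J, η i ^ n i ≠ 0 := fun n =>
      prod_ne_zero_iff.mpr fun i hi => pow_ne_zero _ (mem_filter.mp hi).2
    apply Units.ext
    simp only [Units.coe_prod, Units.val_pow_eq_pow_val]
    have hprod : ∀ n : ι → ℕ,
        ∏ i ∈ J, (r i : K) ^ n i = (∏ i ∈ J, T i ^ n i) / ∏ i ∈ J, η i ^ n i := fun n => by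
      rw [← prod_div_distrib]
      exact prod_congr rfl fun i hi => by rw [hr i hi, div_pow]
    rw [hprod, hprod, div_eq_div_iff (hη u) (hη v)]
    linear_combination hrel J u v huv)
  refine ⟨g, funext fun i => ?_⟩
  by_cases hηi : η i = 0
  · simp [hηi, hzero i hηi]
  have hiJ : i ∈ J := mem_filter.mpr ⟨mem_univ _, hηi⟩
  show (g : K) ^ w i * η i = T i
  rw [← Units.val_pow_eq_pow_val, hg i hiJ, hr i hiJ, div_mul_cancel₀ _ hηi]

end WeightedOrbit

namespace MvPolynomial

theorem zeroLocus_vanishingIdeal_weightedOrbit {ι K : Type*} [Field K] [Fintype ι]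
    [IsAlgClosed K] {w : ι → ℕ} (hw : ∀ i, w i ≠ 0) (η : ι → K) :
    zeroLocus K (vanishingIdeal K (weightedOrbit w η)) = weightedOrbit w η := by
  refine subset_antisymm (fun T hT => mem_weightedOrbit_of_prod_pow_eq hw ?_ ?_)
    (zeroLocus_vanishingIdeal_le _)
  · intro i hi
    simpa using hT (X i) (by rintro _ ⟨t, rfl⟩; simp [hi])
  · intro s u v huv
    have hmem : C (∏ i ∈ s, η i ^ v i) * ∏ i ∈ s, X i ^ u i -
        C (∏ i ∈ s, η i ^ u i) * ∏ i ∈ s, X i ^ v i ∈ vanishingIdeal K (weightedOrbit w η) := by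
      rintro _ ⟨t, rfl⟩
      simp only [map_sub, map_mul, map_prod, map_pow, aeval_C, aeval_X, Algebra.algebraMap_self,
        RingHom.id_apply, mul_pow, prod_mul_distrib, ← pow_mul, prod_pow_eq_pow_sum]
      simp only [mul_comm (w _), huv]
      ring
    simpa [sub_eq_zero] using hT _ hmem

theorem vanishingIdeal_range_algebraMap_comp {σ : Type*} (k K : Type*) [Field k] [Infinite k]
    [Field K] [Algebra k K] :
    vanishingIdeal K (Set.range fun y : σ → k => algebraMap k K ∘ y) = ⊥ := by
  refine eq_bot_iff.mpr fun F hF => funext_set (fun _ => Set.range (algebraMap k K))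
    (fun _ => Set.infinite_range_of_injective (algebraMap k K).injective) fun x hx => ?_
  choose y hy using fun i => hx i trivial
  obtain rfl : algebraMap k K ∘ y = x := _root_.funext hy
  simpa using hF _ ⟨y, rfl⟩

theorem exists_forall_mem_of_isPrime_vanishingIdeal {σ ι α K : Type*} [Field K]
    {D : Set (σ → K)} (hD : (vanishingIdeal K D).IsPrime) (P : ι → MvPolynomial σ K)
    {s : Finset α} {V : α → Set (ι → K)}
    (hV : ∀ a ∈ s, zeroLocus K (vanishingIdeal K (V a)) ⊆ V a)
    (hcover : ∀ x ∈ D, ∃ a ∈ s, (fun i => eval x (P i)) ∈ V a) :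
    ∃ a ∈ s, ∀ x ∈ D, (fun i => eval x (P i)) ∈ V a := by
  by_contra! hnot
  have hsep : ∀ a ∈ s, ∃ F ∈ vanishingIdeal K (V a), bind₁ P F ∉ vanishingIdeal K D := by
    intro a ha
    obtain ⟨x, hx, hxV⟩ := hnot a ha
    obtain ⟨F, hF, hFx⟩ : ∃ F ∈ vanishingIdeal K (V a), aeval (fun i => eval x (P i)) F ≠ 0 := by
      simpa [mem_zeroLocus_iff] using mt (hV a ha ·) hxV
    refine ⟨F, hF, fun hPF => hFx ?_⟩
    simpa [aeval_bind₁] using hPF x hx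
  choose! F hFV hFD using hsep
  have hprod : ∏ a ∈ s, bind₁ P (F a) ∈ vanishingIdeal K D := by
    intro x hx
    obtain ⟨a, ha, hxa⟩ := hcover x hx
    rw [map_prod]
    exact prod_eq_zero ha (by simpa [aeval_bind₁] using hFV a ha _ hxa)
  obtain ⟨a, ha, hmem⟩ := (Ideal.IsPrime.prod_mem_iff (hp := hD)).mp hprod
  exact hFD a ha hmem

end MvPolynomial

namespace Polynomial

theorem multiset_prod_X_sub_C_scaleRoots {R : Type*} [CommRing R] (N : Multiset R) (t : R) :
    (N.map fun a => X - C a).prod.scaleRoots t = ((N.map (t * ·)).map fun a => X - C a).prod := by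
  nontriviality R
  induction N using Multiset.induction_on with
  | empty => simp
  | cons a N ih =>
    rw [Multiset.map_cons, Multiset.prod_cons, mul_scaleRoots', X_sub_C_scaleRoots, ih]
    · simp [mul_comm]
    · rw [leadingCoeff_X_sub_C, one_mul, ((monic_multiset_prod_of_monic _ _ fun a _ =>
        monic_X_sub_C a)).leadingCoeff]
      exact one_ne_zero

variable {K : Type*} [Field K] {p : K[X]}

theorem roots_eq_map_mul_iff (hp : p.Monic) (hsplit : p.Splits) (N : Multiset K) (t : K) :
    p.roots = N.map (t * ·) ↔ p = (N.map fun a => X - C a).prod.scaleRoots t := by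
  rw [multiset_prod_X_sub_C_scaleRoots]
  constructor
  · intro h
    rw [← h]
    exact hsplit.eq_prod_roots_of_monic hp
  · intro h
    rw [h, roots_multiset_prod_X_sub_C]

theorem exists_roots_eq_map_mul_iff_mem_weightedOrbit (hp : p.Monic) (hsplit : p.Splits)
    {m : ℕ} (hpm : p.natDegree = m) {N : Multiset K} (hN : Multiset.card N = m) :
    (∃ t, p.roots = N.map (t * ·)) ↔ (fun k : Fin m => p.coeff k) ∈
      weightedOrbit (fun k : Fin m => m - k) (fun k => (N.map fun a => X - C a).prod.coeff k) := by
  set q := (N.map fun a => X - C a).prod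
  have hq : q.Monic := monic_multiset_prod_of_monic _ _ fun a _ => monic_X_sub_C a
  have hqm : q.natDegree = m := by rw [natDegree_multiset_prod_X_sub_C_eq_card, hN]
  simp only [roots_eq_map_mul_iff hp hsplit, weightedOrbit, Set.mem_range, funext_iff]
  refine exists_congr fun t => ⟨fun h k => ?_, fun h => ?_⟩
  · rw [h, coeff_scaleRoots, hqm, mul_comm]
  · ext k
    rw [coeff_scaleRoots, hqm]
    rcases lt_trichotomy k m with hk | rfl | hk
    · rw [← h ⟨k, hk⟩, mul_comm]
    · rw [Nat.sub_self, pow_zero, mul_one, ← hqm, hq.coeff_natDegree, hqm, ← hpm,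
        hp.coeff_natDegree]
    · rw [coeff_eq_zero_of_natDegree_lt (hpm ▸ hk), coeff_eq_zero_of_natDegree_lt (hqm ▸ hk),
        zero_mul]

end Polynomial

open MvPolynomial in
theorem LinearMap.exists_mvPolynomial_eval_eq_charpoly_coeff {σ n R : Type*} [CommRing R]
    [Fintype σ] [DecidableEq σ] [Fintype n] [DecidableEq n]
    (B : (σ → R) →ₗ[R] (σ → R) →ₗ[R] Matrix n n R) :
    ∃ P : ℕ → MvPolynomial σ R, ∀ x k, eval x (P k) = (B x x).charpoly.coeff k := by
  let e : σ → σ → R := fun k j => if k = j then 1 else 0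
  let Q : Matrix n n (MvPolynomial σ R) := Matrix.of fun i j =>
    ∑ k, ∑ l, X k * X l * C (B (e k) (e l) i j)
  refine ⟨Q.charpoly.coeff, fun x k => ?_⟩
  have hQ : Q.map (eval x) = B x x := by
    ext i j
    rw [B.pi_apply_eq_sum_univ x]
    simp [Q, e, LinearMap.sum_apply, (B _).pi_apply_eq_sum_univ x, Matrix.sum_apply, mul_assoc,
      Finset.mul_sum]
  rw [← hQ, Matrix.charpoly_map, Polynomial.coeff_map]

theorem Multiset.exists_finset_forall_eq_map_mul {X K : Type*} [Field K] {m : ℕ}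
    {R : X → Multiset K} (hcard : ∀ x, card (R x) = m) {S : Set K} {c : X → K}
    (h : ∀ x, {z | z ∈ R x} = (c x * ·) '' S) :
    ∃ P : Finset (Multiset K), (∀ N ∈ P, card N = m) ∧
      ∀ x, ∃ N ∈ P, ∃ t, R x = N.map (t * ·) := by
  classical
  obtain ⟨F, hF⟩ : ∃ F : Finset K, ∀ x, c x ≠ 0 → S ⊆ F := by
    by_cases hS : S.Finite
    · exact ⟨hS.toFinset, fun _ _ => hS.coe_toFinset.ge⟩
    · refine ⟨∅, fun x hx => absurd ?_ hS⟩
      refine Set.Finite.of_finite_image ?_ (mul_right_injective₀ hx).injOn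
      rw [← h x]
      exact (R x).finite_toSet
  refine ⟨((insert 0 F).sym m).image (↑), by simp, fun x => ?_⟩
  have hmem : ∀ z ∈ R x, ∃ s ∈ S, c x * s = z := fun z hz => by
    rw [← Set.mem_image, ← h x]
    exact hz
  by_cases hx : c x = 0
  · refine ⟨replicate m 0, mem_image.mpr ⟨Sym.replicate m 0,
      replicate_mem_sym (mem_insert_self _ _) m, Sym.coe_replicate⟩, 0, ?_⟩
    rw [map_replicate, zero_mul, eq_replicate]
    refine ⟨hcard x, fun z hz => ?_⟩
    obtain ⟨s, -, rfl⟩ := hmem z hz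
    rw [hx, zero_mul]
  · set N := (R x).map ((c x)⁻¹ * ·)
    refine ⟨N, mem_image.mpr ⟨⟨N, by rw [card_map, hcard]⟩, mem_sym_iff.mpr fun a ha => ?_, rfl⟩,
      c x, ?_⟩
    · obtain ⟨z, hz, rfl⟩ := mem_map.mp ha
      obtain ⟨s, hs, rfl⟩ := hmem z hz
      rw [inv_mul_cancel_left₀ hx]
      exact mem_insert_of_mem (hF x hx hs)
    · rw [map_map]
      conv_lhs => rw [← map_id (R x)]
      exact map_congr rfl fun z _ => (mul_inv_cancel_left₀ hx z).symm

namespace Polynomial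

variable {σ k K : Type*} [Field k] [Infinite k] [Field K] [IsAlgClosed K] [Algebra k K]

theorem exists_forall_roots_eq_map_mul {m : ℕ} {p : (σ → k) → K[X]} (hp : ∀ x, (p x).Monic)
    (hpm : ∀ x, (p x).natDegree = m) (P : Fin m → MvPolynomial σ K)
    (hP : ∀ x i, MvPolynomial.eval (algebraMap k K ∘ x) (P i) = (p x).coeff i)
    {S : Set K} {c : (σ → k) → K} (h : ∀ x, {z | z ∈ (p x).roots} = (c x * ·) '' S) :
    ∃ M : Multiset K, Multiset.card M = m ∧ ∃ c' : (σ → k) → K, ∀ x,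
      (p x).roots = M.map (c' x * ·) := by
  have hsplit : ∀ x, (p x).Splits := fun x => IsAlgClosed.splits _
  obtain ⟨Ps, hPs, hcover⟩ := Multiset.exists_finset_forall_eq_map_mul
    (fun x => hpm x ▸ splits_iff_card_roots.mp (hsplit x)) h
  have horbit := fun x N hN =>
    exists_roots_eq_map_mul_iff_mem_weightedOrbit (hp x) (hsplit x) (hpm x) (hPs N hN)
  have hcoeff : ∀ x, (fun i => MvPolynomial.eval (algebraMap k K ∘ x) (P i)) =
      fun i : Fin m => (p x).coeff i := fun x => _root_.funext (hP x)
  obtain ⟨N, hN, hNx⟩ := MvPolynomial.exists_forall_mem_of_isPrime_vanishingIdeal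
    (MvPolynomial.vanishingIdeal_range_algebraMap_comp k K ▸ Ideal.isPrime_bot) P
    (fun N _ => (MvPolynomial.zeroLocus_vanishingIdeal_weightedOrbit
      (fun i : Fin m => Nat.sub_ne_zero_of_lt i.2) _).subset)
    (Set.forall_mem_range.mpr fun x => by
      obtain ⟨N, hN, hx⟩ := hcover x
      exact ⟨N, hN, hcoeff x ▸ (horbit x N hN).mp hx⟩)
  choose c' hc' using fun x => (horbit x N hN).mpr (hcoeff x ▸ hNx _ ⟨x, rfl⟩)
  exact ⟨N, hPs N hN, c', hc'⟩

end Polynomial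

open Polynomial in
theorem projectively_osserman_implies_strongly_general
    (m : ℕ)
    (B : (Fin m → ℝ) →ₗ[ℝ] (Fin m → ℝ) →ₗ[ℝ] Matrix (Fin m) (Fin m) ℝ)
    (S : Set ℂ) (c : (Fin m → ℝ) → ℂ)
    (h : ∀ x : Fin m → ℝ,
      {z : ℂ | Polynomial.aeval z (Matrix.charpoly (B x x)) = 0} =
        (fun s => c x * s) '' S) :
    ∃ M : Multiset ℂ, Multiset.card M = m ∧
      ∃ c' : (Fin m → ℝ) → ℂ, ∀ x : Fin m → ℝ,
        (Polynomial.map (algebraMap ℝ ℂ) (Matrix.charpoly (B x x))).roots =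
          M.map (fun s => c' x * s) := by
  obtain ⟨Q, hQ⟩ := B.exists_mvPolynomial_eval_eq_charpoly_coeff
  refine exists_forall_roots_eq_map_mul (fun x => (B x x).charpoly_monic.map _) (fun x => ?_)
    (fun i => MvPolynomial.map (algebraMap ℝ ℂ) (Q i)) (fun x i => ?_) (S := S) (c := c)
    (fun x => ?_)
  · rw [(B x x).charpoly_monic.natDegree_map, Matrix.charpoly_natDegree_eq_dim, Fintype.card_fin]
  · rw [MvPolynomial.eval_map, ← MvPolynomial.eval₂_comp, hQ, coeff_map]
  · rw [← h x]
    ext z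
    rw [Set.mem_ofPred_eq, Set.mem_ofPred_eq, aeval_def]
    exact mem_roots_map (B x x).charpoly_monic.ne_zero

/-- Paper's Lemma 2.1: projectively Osserman at a point implies strongly
projectively Osserman at that point, in pointwise algebraic form. -/
theorem projectively_osserman_implies_strongly
    (m : ℕ) (hm : 1 ≤ m)
    (B : (Fin m → ℝ) →ₗ[ℝ] (Fin m → ℝ) →ₗ[ℝ] Matrix (Fin m) (Fin m) ℝ)
    (hBsym : ∀ x y, B x y = B y x)
    (S : Set ℂ) (c : (Fin m → ℝ) → ℂ)
    (h : ∀ x : Fin m → ℝ,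
      {z : ℂ | Polynomial.aeval z (Matrix.charpoly (B x x)) = 0} =
        (fun s => c x * s) '' S) :
    ∃ M : Multiset ℂ, Multiset.card M = m ∧
      ∃ c' : (Fin m → ℝ) → ℂ, ∀ x : Fin m → ℝ,
        (Polynomial.map (algebraMap ℝ ℂ) (Matrix.charpoly (B x x))).roots =
          M.map (fun s => c' x * s) :=
  projectively_osserman_implies_strongly_general m B S c h
end

section
/- Let g be a symmetric bilinear form on ℝ^m for which there exists a vector x₀ with g(x₀,x₀) > 0. Let ν ≥ 1 and let p : ℝ^m → ℝ be the evaluation of a polynomial in m variables that is homogeneous of degree 2ν. If there is a constant ρ such that p(x) = ρ for every x with g(x,x) = 1, then p(x) = ρ · g(x,x)^ν for every x ∈ ℝ^m. (The polynomial-identity step in the proof of Theorem 2.1.) -/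
/-!
Rescaling a spacelike vector onto the unit pseudo-sphere and using homogeneity of degree `2ν`
gives `p(x) = ρ g(x,x)^ν` on the open cone `{g(x,x) > 0}`, which is nonempty since it
contains `x₀`. Both sides are polynomial, hence analytic, functions on the connected space
`ℝ^m`, so the identity theorem extends the equality from this open set to all of `ℝ^m`.
-/

open MvPolynomial Filter Topology

theorem MvPolynomial.IsHomogeneous.eval_smul {R σ : Type*} [CommSemiring R]
    {P : MvPolynomial σ R} {n : ℕ} (hP : P.IsHomogeneous n) (t : R) (x : σ → R) :
    eval (t • x) P = t ^ n * eval x P := by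
  rw [eval_eq, eval_eq, Finset.mul_sum]
  refine Finset.sum_congr rfl fun d hd => ?_
  have hdeg : ∑ i ∈ d.support, d i = n := by
    simpa [Finsupp.weight_apply, Finsupp.sum] using hP (mem_support_iff.mp hd)
  simp only [Pi.smul_apply, smul_eq_mul, mul_pow, Finset.prod_mul_distrib,
    Finset.prod_pow_eq_pow_sum, hdeg]
  ring

theorem MvPolynomial.IsHomogeneous.eval_eq_mul_pow_of_pos {σ : Type*}
    {P : MvPolynomial σ ℝ} {ν : ℕ} (hP : P.IsHomogeneous (2 * ν))
    (g : LinearMap.BilinForm ℝ (σ → ℝ)) {ρ : ℝ} (hconst : ∀ x, g x x = 1 → eval x P = ρ)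
    {y : σ → ℝ} (hy : 0 < g y y) : eval y P = ρ * g y y ^ ν := by
  set s := √(g y y)
  have hs : s ^ 2 = g y y := Real.sq_sqrt hy.le
  have hs₀ : s ≠ 0 := (Real.sqrt_pos.mpr hy).ne'
  have hunit : g (s⁻¹ • y) (s⁻¹ • y) = 1 := by
    simp only [map_smul, LinearMap.smul_apply, smul_eq_mul, ← hs]
    field_simp
  calc eval y P = eval (s • s⁻¹ • y) P := by rw [smul_inv_smul₀ hs₀]
    _ = (s ^ 2) ^ ν * ρ := by rw [hP.eval_smul, hconst _ hunit, pow_mul]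
    _ = ρ * g y y ^ ν := by rw [hs, mul_comm]

theorem LinearMap.BilinForm.analyticOnNhd_apply_self {E : Type*} [NormedAddCommGroup E]
    [NormedSpace ℝ E] [FiniteDimensional ℝ E] (g : LinearMap.BilinForm ℝ E) :
    AnalyticOnNhd ℝ (fun x => g x x) Set.univ := fun x _ =>
  (g.toContinuousBilinearMap.analyticAt_bilinear (x, x)).comp₂ analyticAt_id analyticAt_id

theorem homogeneous_constant_on_unit_sphere_general
    (m : ℕ) (g : LinearMap.BilinForm ℝ (Fin m → ℝ))
    (x₀ : Fin m → ℝ) (hx₀ : 0 < g x₀ x₀)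
    (ν : ℕ)
    (P : MvPolynomial (Fin m) ℝ) (hP : P.IsHomogeneous (2 * ν))
    (ρ : ℝ) (hconst : ∀ x : Fin m → ℝ, g x x = 1 → MvPolynomial.eval x P = ρ) :
    ∀ x : Fin m → ℝ, MvPolynomial.eval x P = ρ * (g x x) ^ ν := by
  have hq := g.analyticOnNhd_apply_self
  have hspacelike : {x | 0 < g x x} ∈ 𝓝 x₀ :=
    (isOpen_lt continuous_const (continuousOn_univ.mp hq.continuousOn)).mem_nhds hx₀
  have hcone : (fun x => eval x P) =ᶠ[𝓝 x₀] fun x => ρ * g x x ^ ν :=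
    eventually_of_mem hspacelike fun _ hy => hP.eval_eq_mul_pow_of_pos g hconst hy
  exact congrFun <| (AnalyticOnNhd.eval_mvPolynomial P).eq_of_eventuallyEq
    (analyticOnNhd_const.mul (hq.pow ν)) hcone

/-- The polynomial-identity step in the proof of Theorem 2.1: a homogeneous
polynomial function of degree 2ν that is constant on the unit spacelike
pseudo-sphere of a symmetric bilinear form admitting a spacelike vector
equals ρ·g(x,x)^ν everywhere. -/
theorem homogeneous_constant_on_unit_sphere
    (m : ℕ) (g : LinearMap.BilinForm ℝ (Fin m → ℝ))
    (hgsym : ∀ x y, g x y = g y x)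
    (x₀ : Fin m → ℝ) (hx₀ : 0 < g x₀ x₀)
    (ν : ℕ) (hν : 1 ≤ ν)
    (P : MvPolynomial (Fin m) ℝ) (hP : P.IsHomogeneous (2 * ν))
    (ρ : ℝ) (hconst : ∀ x : Fin m → ℝ, g x x = 1 → MvPolynomial.eval x P = ρ) :
    ∀ x : Fin m → ℝ, MvPolynomial.eval x P = ρ * (g x x) ^ ν :=
  homogeneous_constant_on_unit_sphere_general m g x₀ hx₀ ν P hP ρ hconst
end

section
/- Let g be a nondegenerate symmetric bilinear form on ℝ^m admitting a vector x₀ with g(x₀,x₀) > 0, let B : ℝ^m × ℝ^m → M_m(ℝ) be a symmetric bilinear map, and set J(x) := B(x,x). Suppose there is a fixed multiset M⁺ of complex numbers such that for every u with g(u,u) = 1 the complex root multiset of J(u) equals M⁺ (i.e., the structure is spacelike Osserman at the point). Then for every x ∈ ℝ^m the complex root multiset of J(x) equals the multiset obtained from M⁺ by multiplying each element by g(x,x). (Theorem 2.1: an Osserman pseudo-Riemannian manifold is projectively Osserman, in pointwise algebraic form.) -/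
/-!
Write `J(v) = B v v`. If `g u u = 1` then `J(s • u) = s² • J(u)` with `s² = g (s • u) (s • u)`, and
the characteristic polynomial of `c • A` is `A.charpoly.scaleRoots c`. The spacelike Osserman
condition fixes `charpoly J(u)` for unit spacelike `u`, so `charpoly J(v) = p₀.scaleRoots (g v v)`
on the spacelike cone. Both sides are polynomial in `v`, and the cone is Zariski dense: on each
line `x + t • x₀` it contains every large `t`, because `g` restricts to a quadratic in `t` with
leading coefficient `g x₀ x₀ > 0`. So the identity holds for all `v`; over `ℂ`, `scaleRoots c`
multiplies every root by `c`, also for `c = 0`.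
-/

open Polynomial

namespace Polynomial

theorem Splits.roots_scaleRoots {K : Type*} [Field K] {p : K[X]} (hp : p.Splits) (r : K) :
    (p.scaleRoots r).roots = p.roots.map (r * ·) := by
  rcases eq_or_ne r 0 with rfl | hr
  · rcases eq_or_ne p 0 with rfl | hp0
    · simp
    rw [scaleRoots_zero, roots_smul_nonzero _ (leadingCoeff_ne_zero.2 hp0), roots_X_pow,
      hp.natDegree_eq_card_roots]
    simp [Multiset.map_const', Multiset.nsmul_singleton]
  · exact Polynomial.roots_scaleRoots p hr.isUnit

theorem eq_of_monic_of_roots_map_eq {K L : Type*} [Field K] [Field L] [IsAlgClosed L]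
    (f : K →+* L) {p q : K[X]} (hp : p.Monic) (hq : q.Monic)
    (h : (p.map f).roots = (q.map f).roots) : p = q := by
  apply map_injective f f.injective
  rw [(IsAlgClosed.splits _).eq_prod_roots_of_monic (hp.map f),
    (IsAlgClosed.splits _).eq_prod_roots_of_monic (hq.map f), h]

theorem scaleRoots_comp_C_mul_X {R : Type*} [CommRing R] (p : R[X]) (c : R) :
    (p.scaleRoots c).comp (C c * X) = C c ^ p.natDegree * p := by
  simpa [comp, eval₂_X] using scaleRoots_eval₂_mul (p := p) C X c

theorem eq_scaleRoots_eval_of_infinite {R : Type*} [CommRing R] [IsDomain R] {N : R[X][X]}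
    {p G : R[X]} {s : Set R} (hs : s.Infinite)
    (h : ∀ t ∈ s, N.map (evalRingHom t) = p.scaleRoots (G.eval t)) (t : R) :
    N.map (evalRingHom t) = p.scaleRoots (G.eval t) := by
  have hcoeff : ∀ k, N.coeff k = C (p.coeff k) * G ^ (p.natDegree - k) := fun k ↦
    eq_of_infinite_eval_eq _ _ <| hs.mono fun t ht ↦ by
      simpa [coeff_map, coeff_scaleRoots] using congr_arg (coeff · k) (h t ht)
  ext k
  simp [coeff_map, coeff_scaleRoots, hcoeff]

theorem infinite_setOf_eval_pos {P : ℝ[X]} (hdeg : 0 < P.degree) (hlead : 0 < P.leadingCoeff) :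
    {t | 0 < P.eval t}.Infinite := by
  obtain ⟨T, hT⟩ := ((tendsto_atTop_of_leadingCoeff_nonneg P hdeg hlead.le).eventually_gt_atTop
    0).exists_forall_of_atTop
  exact (Set.Ici_infinite T).mono hT

end Polynomial

namespace Matrix

variable {n : Type*} [Fintype n] [DecidableEq n]

theorem charpoly_smul_comp_C_mul_X {R : Type*} [CommRing R] (A : Matrix n n R) (c : R) :
    (c • A).charpoly.comp (C c * X) = C c ^ Fintype.card n * A.charpoly := by
  have hmat : (charmatrix (c • A)).map (compRingHom (C c * X)) = C c • charmatrix A := by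
    ext i j
    by_cases hij : i = j
    · subst hij; simp [compRingHom, mul_sub]
    · simp [compRingHom, charmatrix_apply_ne _ _ _ hij]
  rw [charpoly, ← coe_compRingHom_apply, RingHom.map_det, RingHom.mapMatrix_apply, hmat,
    det_smul, charpoly]

theorem charpoly_smul {K : Type*} [Field K] (A : Matrix n n K) (c : K) :
    (c • A).charpoly = A.charpoly.scaleRoots c := by
  rcases eq_or_ne c 0 with rfl | hc
  · simp [(charpoly_monic A).leadingCoeff, charpoly_natDegree_eq_dim]
  have hcomp := (charpoly_smul_comp_C_mul_X A c).trans
    ((charpoly_natDegree_eq_dim A) ▸ (scaleRoots_comp_C_mul_X A.charpoly c)).symm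
  have hinv : ∀ q : K[X], (q.comp (C c * X)).comp (C c⁻¹ * X) = q := fun q ↦ by
    rw [comp_assoc]; simp [← mul_assoc, ← C_mul, hc]
  rw [← hinv (c • A).charpoly, hcomp, hinv]

end Matrix

theorem LinearMap.apply_add_smul_add_smul {R V W : Type*} [CommSemiring R] [AddCommMonoid V]
    [Module R V] [AddCommMonoid W] [Module R W] (B : V →ₗ[R] V →ₗ[R] W) (x y : V) (t : R) :
    B (x + t • y) (x + t • y) = B x x + t • (B x y + B y x) + t ^ 2 • B y y := by
  simp only [map_add, map_smul, LinearMap.add_apply, LinearMap.smul_apply, smul_add, smul_smul]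
  module

section SpacelikeCone

variable {V n : Type*} [AddCommGroup V] [Module ℝ V] [Fintype n] [DecidableEq n]

theorem LinearMap.BilinForm.exists_eq_smul_of_pos {g : LinearMap.BilinForm ℝ V} {v : V}
    (hv : 0 < g v v) : ∃ u : V, ∃ s : ℝ, g u u = 1 ∧ v = s • u := by
  have hs : Real.sqrt (g v v) ≠ 0 := (Real.sqrt_pos.2 hv).ne'
  refine ⟨(Real.sqrt (g v v))⁻¹ • v, Real.sqrt (g v v), ?_, ?_⟩
  · simp only [map_smul, LinearMap.smul_apply, smul_eq_mul, ← mul_assoc, ← mul_inv,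
      Real.mul_self_sqrt hv.le, inv_mul_cancel₀ hv.ne']
  · rw [smul_smul, mul_inv_cancel₀ hs, one_smul]

theorem charpoly_eq_scaleRoots_of_forall_pos (g : LinearMap.BilinForm ℝ V)
    (B : V →ₗ[ℝ] V →ₗ[ℝ] Matrix n n ℝ) (p : ℝ[X]) {x₀ : V} (hx₀ : 0 < g x₀ x₀)
    (h : ∀ v, 0 < g v v → (B v v).charpoly = p.scaleRoots (g v v)) (x : V) :
    (B x x).charpoly = p.scaleRoots (g x x) := by
  set N : Matrix n n ℝ[X] := (B x x).map C + (X : ℝ[X]) • (B x x₀ + B x₀ x).map C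
    + (X : ℝ[X]) ^ 2 • (B x₀ x₀).map C
  set G : ℝ[X] := C (g x₀ x₀) * X ^ 2 + C (g x x₀ + g x₀ x) * X + C (g x x)
  have hN : ∀ t : ℝ, N.map (evalRingHom t) = B (x + t • x₀) (x + t • x₀) := fun t ↦ by
    rw [LinearMap.apply_add_smul_add_smul]
    ext i j
    simp only [coe_evalRingHom, Matrix.map_apply, Matrix.add_apply, Matrix.smul_apply, map_add,
      smul_eq_mul, X_pow_mul_C, eval_add, eval_C, eval_mul, eval_X, eval_pow, smul_add, N]
    ring
  have hG : ∀ t : ℝ, G.eval t = g (x + t • x₀) (x + t • x₀) := fun t ↦ by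
    rw [LinearMap.apply_add_smul_add_smul]
    simp only [map_add, eval_add, eval_mul, eval_C, eval_pow, eval_X, smul_eq_mul, G]
    ring
  have hpos : {t : ℝ | 0 < G.eval t}.Infinite := infinite_setOf_eval_pos
    (by rw [degree_quadratic hx₀.ne']; norm_num) (by rwa [leadingCoeff_quadratic hx₀.ne'])
  have hline := eq_scaleRoots_eval_of_infinite hpos (N := N.charpoly) (fun t ht ↦ by
    rw [← Matrix.charpoly_map, hN, hG]
    exact h _ ((hG t).symm ▸ ht)) 0
  rwa [← Matrix.charpoly_map, hN, hG, zero_smul, add_zero] at hline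

end SpacelikeCone

theorem osserman_implies_projectively_osserman_general
    (m : ℕ) (g : LinearMap.BilinForm ℝ (Fin m → ℝ))
    (x₀ : Fin m → ℝ) (hx₀ : 0 < g x₀ x₀)
    (B : (Fin m → ℝ) →ₗ[ℝ] (Fin m → ℝ) →ₗ[ℝ] Matrix (Fin m) (Fin m) ℝ)
    (Mplus : Multiset ℂ)
    (h : ∀ u : Fin m → ℝ, g u u = 1 →
      (Polynomial.map (algebraMap ℝ ℂ) (Matrix.charpoly (B u u))).roots = Mplus) :
    ∀ x : Fin m → ℝ,
      (Polynomial.map (algebraMap ℝ ℂ) (Matrix.charpoly (B x x))).roots =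
        Mplus.map (fun s => ((g x x : ℝ) : ℂ) * s) := by
  obtain ⟨u₀, -, hu₀, -⟩ := LinearMap.BilinForm.exists_eq_smul_of_pos hx₀
  have hunit : ∀ u, g u u = 1 → (B u u).charpoly = (B u₀ u₀).charpoly := fun u hu ↦
    eq_of_monic_of_roots_map_eq (algebraMap ℝ ℂ) (Matrix.charpoly_monic _)
      (Matrix.charpoly_monic _) ((h u hu).trans (h u₀ hu₀).symm)
  have hspacelike :
      ∀ v, 0 < g v v → (B v v).charpoly = (B u₀ u₀).charpoly.scaleRoots (g v v) := by
    intro v hv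
    obtain ⟨u, s, hu, rfl⟩ := LinearMap.BilinForm.exists_eq_smul_of_pos hv
    simp [Matrix.charpoly_smul, hunit u hu, hu, smul_smul]
  intro x
  rw [charpoly_eq_scaleRoots_of_forall_pos g B _ hx₀ hspacelike x,
    map_scaleRoots _ _ _ (by simp [(Matrix.charpoly_monic _).leadingCoeff]),
    (IsAlgClosed.splits _).roots_scaleRoots, h u₀ hu₀]
  rfl

/-- Theorem 2.1 of the paper, in pointwise algebraic form: if the complex root
multiset of the Jacobi operator J(u) is a fixed multiset M⁺ for all unit
spacelike u (spacelike Osserman), then the root multiset of J(x) is g(x,x)·M⁺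
for every tangent vector x (projectively Osserman). -/
theorem osserman_implies_projectively_osserman
    (m : ℕ) (g : LinearMap.BilinForm ℝ (Fin m → ℝ))
    (hgsym : ∀ x y, g x y = g y x)
    (hgnd : ∀ x : Fin m → ℝ, (∀ y, g x y = 0) → x = 0)
    (x₀ : Fin m → ℝ) (hx₀ : 0 < g x₀ x₀)
    (B : (Fin m → ℝ) →ₗ[ℝ] (Fin m → ℝ) →ₗ[ℝ] Matrix (Fin m) (Fin m) ℝ)
    (hBsym : ∀ x y, B x y = B y x)
    (Mplus : Multiset ℂ)
    (h : ∀ u : Fin m → ℝ, g u u = 1 →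
      (Polynomial.map (algebraMap ℝ ℂ) (Matrix.charpoly (B u u))).roots = Mplus) :
    ∀ x : Fin m → ℝ,
      (Polynomial.map (algebraMap ℝ ℂ) (Matrix.charpoly (B x x))).roots =
        Mplus.map (fun s => ((g x x : ℝ) : ℂ) * s) :=
  osserman_implies_projectively_osserman_general m g x₀ hx₀ B Mplus h
end

section
/- Let V₁ and V₂ be finite-dimensional real vector spaces with dim V₂ ≥ 1. Let J₁ : V₁ → End(V₁) satisfy J₁(x)x = 0 for all x ∈ V₁, and let J₂ : V₂ → End(V₂) satisfy spectrum(J₂(y)) = {0} for all y ∈ V₂ (affine Osserman condition). Define J(x,y) := J₁(x) ⊕ J₂(y) ∈ End(V₁ × V₂). Then for every x ∈ V₁ with x ≠ 0 and every y ∈ V₂, spectrum(J(x,y)) = spectrum(J₁(x)); consequently, if there are a set S ⊆ ℝ and a function c : V₁ → ℝ with spectrum(J₁(x)) = c(x)·S for all x ≠ 0, then spectrum(J(x,y)) = c(x)·S for all x ≠ 0 and all y. (Theorem 2.2: the product of a projectively Osserman structure and an affine Osserman structure is projectively Osserman, in pointwise algebraic form.) -/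
lemma spec_prodMap {V₁ V₂ : Type*} [AddCommGroup V₁] [Module ℝ V₁] [AddCommGroup V₂]
    [Module ℝ V₂] [FiniteDimensional ℝ V₁] [FiniteDimensional ℝ V₂]
    (A : Module.End ℝ V₁) (B : Module.End ℝ V₂) :
    spectrum ℝ (LinearMap.prodMap A B : Module.End ℝ (V₁ × V₂)) =
      spectrum ℝ A ∪ spectrum ℝ B := by
  ext μ
  simp only [spectrum.mem_iff, Set.mem_union]
  have h1 : algebraMap ℝ (Module.End ℝ (V₁ × V₂)) μ - LinearMap.prodMap A B =
      LinearMap.prodMap (algebraMap ℝ (Module.End ℝ V₁) μ - A)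
        (algebraMap ℝ (Module.End ℝ V₂) μ - B) := by
    ext v <;> simp [Module.algebraMap_end_apply]
  rw [h1, not_iff_comm, not_or, not_not, not_not, LinearMap.isUnit_iff_ker_eq_bot,
    LinearMap.isUnit_iff_ker_eq_bot, LinearMap.isUnit_iff_ker_eq_bot,
    LinearMap.ker_prodMap, Submodule.prod_eq_bot_iff]

/-- Theorem 2.2 of the paper, in pointwise algebraic form: the product of a
projectively Osserman structure and an affine Osserman structure is
projectively Osserman. -/
theorem product_projectively_osserman
    (V₁ V₂ : Type*) [AddCommGroup V₁] [Module ℝ V₁] [AddCommGroup V₂] [Module ℝ V₂]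
    [FiniteDimensional ℝ V₁] [FiniteDimensional ℝ V₂]
    (hdim : 1 ≤ Module.finrank ℝ V₂)
    (J₁ : V₁ → Module.End ℝ V₁) (hJ₁ : ∀ x : V₁, J₁ x x = 0)
    (J₂ : V₂ → Module.End ℝ V₂) (hJ₂ : ∀ y : V₂, spectrum ℝ (J₂ y) = {0})
    (J : V₁ → V₂ → Module.End ℝ (V₁ × V₂))
    (hJ : ∀ x y, J x y = LinearMap.prodMap (J₁ x) (J₂ y)) :
    (∀ x : V₁, x ≠ 0 → ∀ y : V₂, spectrum ℝ (J x y) = spectrum ℝ (J₁ x)) ∧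
    (∀ (S : Set ℝ) (c : V₁ → ℝ),
      (∀ x : V₁, x ≠ 0 → spectrum ℝ (J₁ x) = (fun s => c x * s) '' S) →
      ∀ x : V₁, x ≠ 0 → ∀ y : V₂,
        spectrum ℝ (J x y) = (fun s => c x * s) '' S) := by
  have main : ∀ x : V₁, x ≠ 0 → ∀ y : V₂, spectrum ℝ (J x y) = spectrum ℝ (J₁ x) := by
    intro x hx y
    have h0 : (0 : ℝ) ∈ spectrum ℝ (J₁ x) := by
      rw [← Module.End.hasEigenvalue_iff_mem_spectrum]
      exact Module.End.hasEigenvalue_of_hasEigenvector ⟨by simp [Module.End.mem_eigenspace_iff, hJ₁ x], hx⟩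
    rw [hJ, spec_prodMap, hJ₂]
    exact Set.union_eq_self_of_subset_right (Set.singleton_subset_iff.mpr h0)
  refine ⟨main, fun S c hS x hx y => ?_⟩
  rw [main x hx y, hS x hx]
end

section
/- Let V be a real vector space of finite dimension m ≥ 2, let τ : V × V → ℝ be a bilinear form, and let x ∈ V with x ≠ 0. Define the endomorphism J_τ(x) of V by J_τ(x)y = τ(x,x)·y − τ(x,y)·x. If τ(x,x) = 0 then spectrum(J_τ(x)) = {0}; if τ(x,x) ≠ 0 then spectrum(J_τ(x)) = {0, τ(x,x)}. (The spectral computation of Section 4 showing that such connections are projectively Osserman.) -/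
/-- The spectral computation of Section 4 of the paper: the Jacobi operator
J_τ(x)y = τ(x,x)y − τ(x,y)x of a relative hypersurface has spectrum {0} when
τ(x,x) = 0 and spectrum {0, τ(x,x)} when τ(x,x) ≠ 0. -/
theorem spectrum_jacobi_relative_hypersurface
    (V : Type*) [AddCommGroup V] [Module ℝ V] [FiniteDimensional ℝ V]
    (m : ℕ) (hm : 2 ≤ m) (hdim : Module.finrank ℝ V = m)
    (τ : LinearMap.BilinForm ℝ V)
    (x : V) (hx : x ≠ 0)
    (J : Module.End ℝ V)
    (hJ : ∀ y : V, J y = τ x x • y - τ x y • x) :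
    (τ x x = 0 → spectrum ℝ J = {0}) ∧
    (τ x x ≠ 0 → spectrum ℝ J = {0, τ x x}) := by
  have hJx : J x = 0 := by rw [hJ]; abel
  have h0 : (0 : ℝ) ∈ spectrum ℝ J := by
    rw [← Module.End.hasEigenvalue_iff_mem_spectrum]
    exact Module.End.hasEigenvalue_of_hasEigenvector
      ⟨by rw [Module.End.mem_eigenspace_iff, hJx, zero_smul], hx⟩
  have hspec : ∀ μ : ℝ, μ ∈ spectrum ℝ J → μ = 0 ∨ μ = τ x x := by
    intro μ hμ
    rw [← Module.End.hasEigenvalue_iff_mem_spectrum] at hμ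
    obtain ⟨y, hy, hy0⟩ := hμ.exists_hasEigenvector
    rw [Module.End.mem_eigenspace_iff] at hy
    have hey : J y = μ • y := hy
    rw [hJ] at hy
    by_cases hμc : μ = τ x x
    · exact Or.inr hμc
    · left
      have h1 : (τ x x - μ) • y = τ x y • x := by
        rw [sub_smul, ← hy]; abel
      have hne : τ x x - μ ≠ 0 := sub_ne_zero.mpr (fun h => hμc h.symm)
      set k : ℝ := (τ x x - μ)⁻¹ * τ x y with hk
      have hyx : y = k • x := by
        rw [hk, mul_smul, ← h1, smul_smul, inv_mul_cancel₀ hne, one_smul]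
      have hJy : J y = 0 := by
        rw [hyx, map_smul, hJx, smul_zero]
      have : μ • y = 0 := by rw [← hey, hJy]
      rcases smul_eq_zero.mp this with h | h
      · exact h
      · exact absurd h hy0
  have hc_spec : τ x x ≠ 0 → τ x x ∈ spectrum ℝ J := by
    intro hc
    -- the functional τ x is nonzero, so its kernel is nontrivial (dim ≥ 2)
    have hker : ∃ y : V, τ x y = 0 ∧ y ≠ 0 := by
      have hrange : Module.finrank ℝ (LinearMap.range (τ x)) ≤ 1 := by
        simpa using (Submodule.finrank_le (LinearMap.range (τ x)))
      have hrk := LinearMap.finrank_range_add_finrank_ker (τ x)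
      have hkpos : 0 < Module.finrank ℝ (LinearMap.ker (τ x)) := by
        omega
      haveI := Module.finrank_pos_iff.mp hkpos
      obtain ⟨⟨y, hy⟩, hy0⟩ := exists_ne (0 : LinearMap.ker (τ x))
      exact ⟨y, hy, fun h => hy0 (by simp [h])⟩
    obtain ⟨y, hτy, hy0⟩ := hker
    rw [← Module.End.hasEigenvalue_iff_mem_spectrum]
    exact Module.End.hasEigenvalue_of_hasEigenvector
      ⟨by rw [Module.End.mem_eigenspace_iff, hJ, hτy, zero_smul, sub_zero], hy0⟩
  constructor
  · intro hc
    ext μ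
    simp only [Set.mem_singleton_iff]
    constructor
    · intro h
      rcases hspec μ h with h' | h'
      · exact h'
      · rw [h', hc]
    · rintro rfl; exact h0
  · intro hc
    ext μ
    simp only [Set.mem_insert_iff, Set.mem_singleton_iff]
    constructor
    · exact hspec μ
    · rintro (rfl | rfl)
      · exact h0
      · exact hc_spec hc
end
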